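/- For vectors λ_τ, v ∈ ℝ^{d−1}, a friction bound b > 0 and c > 0, the condition −λ_τ·max(b, ‖λ_τ + c v‖) + b·(λ_τ + c v) = 0 holds if and only if the Coulomb friction conditions hold: ‖λ_τ‖ ≤ b, and either (‖λ_τ‖ < b and v = 0) or (‖λ_τ‖ = b and there exists ζ ≥ 0 with v = ζ·λ_τ). -/
import Mathlib


/-- For tangential traction `λ_τ` and slip velocity `v` in `ℝ^{d-1}`, friction bound
`b > 0` and parameter `c > 0`, the complementarity condition
`-max(b, ‖λ_τ + c v‖) • λ_τ + b • (λ_τ + c v) = 0` holds iff the Coulomb friction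
conditions hold: `‖λ_τ‖ ≤ b`, and either (`‖λ_τ‖ < b` and `v = 0`) or
(`‖λ_τ‖ = b` and `v = ζ • λ_τ` for some `ζ ≥ 0`). -/
theorem stmt8 {k : ℕ} (b c : ℝ) (hb : 0 < b) (hc : 0 < c)
    (lamτ v : EuclideanSpace ℝ (Fin k)) :
    (-(max b ‖lamτ + c • v‖)) • lamτ + b • (lamτ + c • v) = 0 ↔
      (‖lamτ‖ ≤ b ∧
        ((‖lamτ‖ < b ∧ v = 0) ∨ (‖lamτ‖ = b ∧ ∃ ζ : ℝ, 0 ≤ ζ ∧ v = ζ • lamτ))) := by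
  have hbc : b * c ≠ 0 := by positivity
  constructor
  · intro h
    rcases le_or_gt ‖lamτ + c • v‖ b with hle | hlt
    · rw [max_eq_left hle] at h
      have hv : v = 0 := by
        have h1 : (b * c) • v = 0 := by linear_combination (norm := module) h
        rcases smul_eq_zero.mp h1 with h2 | h2
        · exact absurd h2 hbc
        · exact h2
      subst hv
      simp only [smul_zero, add_zero] at hle
      rcases lt_or_eq_of_le hle with hlt | heq
      · exact ⟨hle, Or.inl ⟨hlt, rfl⟩⟩
      · exact ⟨hle, Or.inr ⟨heq, 0, le_refl 0, by simp⟩⟩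
    · rw [max_eq_right hlt.le] at h
      have h2 : b • (lamτ + c • v) = ‖lamτ + c • v‖ • lamτ := by
        linear_combination (norm := module) h
      have hwne : ‖lamτ + c • v‖ ≠ 0 := by linarith
      have hn : b * ‖lamτ + c • v‖ = ‖lamτ + c • v‖ * ‖lamτ‖ := by
        have := congrArg norm h2
        rwa [norm_smul, norm_smul, Real.norm_of_nonneg hb.le,
          Real.norm_of_nonneg (norm_nonneg _)] at this
      have hlb : ‖lamτ‖ = b := by
        have := mul_left_cancel₀ hwne
          (by linarith : ‖lamτ + c • v‖ * ‖lamτ‖ = ‖lamτ + c • v‖ * b)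
        exact this
      have h3 : (b * c) • v = (‖lamτ + c • v‖ - b) • lamτ := by
        linear_combination (norm := module) h
      refine ⟨hlb.le, Or.inr ⟨hlb, (‖lamτ + c • v‖ - b) / (b * c), ?_, ?_⟩⟩
      · apply div_nonneg (by linarith) (by positivity)
      · apply smul_right_injective (EuclideanSpace ℝ (Fin k)) hbc
        show (b * c) • v = (b * c) • (((‖lamτ + c • v‖ - b) / (b * c)) • lamτ)
        rw [h3, smul_smul]
        congr 1
        field_simp
  · rintro ⟨hle, ⟨hlt, hv⟩ | ⟨heq, ζ, hζ, hv⟩⟩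
    · subst hv
      simp only [smul_zero, add_zero]
      rw [max_eq_left hle]
      module
    · subst hv
      have hw : lamτ + c • (ζ • lamτ) = (1 + c * ζ) • lamτ := by module
      rw [hw, norm_smul, Real.norm_of_nonneg (by positivity), heq,
        max_eq_right (by nlinarith [mul_nonneg (mul_nonneg hc.le hζ) hb.le] : b ≤ (1 + c * ζ) * b)]
      module
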